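/- arXiv:1804.04027 — 2 statements merged into one kernel-verified Lean document; each statement's English description precedes it below -/
import Mathlib

section
/- Let u_- ≥ 0 ≥ u_+ with u_- > u_+ and v_± > 0. With v_*(ε) the two-shock intermediate density and σ₂(ε) - σ₁(ε) = (u_+ + √(u_+² + 4ε v_+))/2 - (u_- - √(u_-² + 4ε v_-))/2 the difference of shock speeds, one has (σ₂(ε) - σ₁(ε))·v_*(ε) → u_- v_+ - u_+ v_- as ε → 0⁺. -/
/-!
Rationalizing the square roots gives `u₊ + √(u₊² + 4εv₊) = 4εv₊ / p` and
`u₋ - √(u₋² + 4εv₋) = -4εv₋ / q` with `p = √(u₊² + 4εv₊) - u₊` and `q = u₋ + √(u₋² + 4εv₋)`,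
both positive for `ε > 0`. The factor `ε` then cancels between the speed difference and the
denominator of `v_*`, and the weight equals
`(v₊ q + v₋ p) / (p + q) · (u₋ - u₊ + σ₂ - σ₁)`, which is continuous at `ε = 0`. There
`p = -2u₊`, `q = 2u₋` and `σ₁ = σ₂ = 0` because `u₋ ≥ 0 ≥ u₊`, so the limit is `u₋v₊ - u₊v₋`.
-/

open Filter Topology

section Rationalize

variable {K : Type*} [Field K] {u a c : K}

theorem add_eq_div_sub_of_sq_eq (ha : a ^ 2 = u ^ 2 + c) (hau : a - u ≠ 0) :
    u + a = c / (a - u) := by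
  rw [eq_div_iff hau]
  linear_combination ha

theorem sub_eq_neg_div_add_of_sq_eq (ha : a ^ 2 = u ^ 2 + c) (hua : u + a ≠ 0) :
    u - a = -(c / (u + a)) := by
  rw [← neg_div, eq_div_iff hua]
  linear_combination -ha

end Rationalize

theorem shock_weight_eq {K : Type*} [Field K] [NeZero (2 : K)] {x y um up vm vp e p q : K}
    (hvm : vm ≠ 0) (hvp : vp ≠ 0) (he : e ≠ 0) (hp : p ≠ 0) (hq : q ≠ 0) (hpq : p + q ≠ 0)
    (hx : x = 4 * e * vp / p) (hy : y = -(4 * e * vm / q)) :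
    (x / 2 - y / 2) *
        ((up - um - x / (2 * vp) * vp + y / (2 * vm) * vm) / (y / (2 * vm) - x / (2 * vp))) =
      (vp * q + vm * p) / (p + q) * (um - up + x / 2 - y / 2) := by
  have hden : y / (2 * vm) - x / (2 * vp) = -(2 * e * (p + q) / (p * q)) := by
    subst hx hy
    field_simp
    ring
  rw [hden]
  subst hx hy
  field_simp
  ring

theorem abs_lt_sqrt_sq_add {u c : ℝ} (hc : 0 < c) : |u| < √(u ^ 2 + c) := by
  rw [Real.lt_sqrt (abs_nonneg u), sq_abs]
  linarith

theorem tendsto_sqrt_sq_add_mul (u v : ℝ) :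
    Tendsto (fun e : ℝ => √(u ^ 2 + 4 * e * v)) (𝓝 0) (𝓝 |u|) := by
  have hcont : Continuous fun e : ℝ => √(u ^ 2 + 4 * e * v) := by fun_prop
  simpa [Real.sqrt_sq_eq_abs] using hcont.tendsto 0

theorem weight_limit (um up vm vp : ℝ) (h1 : um ≥ 0) (h2 : 0 ≥ up)
    (h3 : um > up) (hvm : 0 < vm) (hvp : 0 < vp) :
    Filter.Tendsto (fun e : ℝ =>
      ((up + Real.sqrt (up ^ 2 + 4 * e * vp)) / 2 -
        (um - Real.sqrt (um ^ 2 + 4 * e * vm)) / 2) *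
        ((up - um - ((up + Real.sqrt (up ^ 2 + 4 * e * vp)) / (2 * vp)) * vp + ((um - Real.sqrt (um ^ 2 + 4 * e * vm)) / (2 * vm)) * vm) / ((um - Real.sqrt (um ^ 2 + 4 * e * vm)) / (2 * vm) - (up + Real.sqrt (up ^ 2 + 4 * e * vp)) / (2 * vp))))
      (nhdsWithin 0 (Set.Ioi 0)) (nhds (um * vp - up * vm)) := by
  have hA : Tendsto (fun e : ℝ => √(up ^ 2 + 4 * e * vp)) (𝓝 0) (𝓝 (-up)) := by
    simpa [abs_of_nonpos h2] using tendsto_sqrt_sq_add_mul up vp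
  have hB : Tendsto (fun e : ℝ => √(um ^ 2 + 4 * e * vm)) (𝓝 0) (𝓝 um) := by
    simpa [abs_of_nonneg h1] using tendsto_sqrt_sq_add_mul um vm
  have hp := hA.sub_const up
  have hq := hB.const_add um
  have hden : -up - up + (um + um) ≠ 0 := by linarith
  have hlim := (((hq.const_mul vp).add (hp.const_mul vm)).div (hp.add hq) hden).mul
    (((tendsto_const_nhds (x := um - up)).add ((hA.const_add up).div_const 2)).sub
      ((hB.const_sub um).div_const 2))
  have hvalue : (vp * (um + um) + vm * (-up - up)) / (-up - up + (um + um)) *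
      (um - up + (up + -up) / 2 - (um - um) / 2) = um * vp - up * vm := by
    rw [div_mul_eq_mul_div, div_eq_iff hden]
    ring
  rw [hvalue] at hlim
  refine (hlim.mono_left nhdsWithin_le_nhds).congr' ?_
  filter_upwards [self_mem_nhdsWithin] with e (he : 0 < e)
  have hltA := abs_lt_sqrt_sq_add (u := up) (by positivity : 0 < 4 * e * vp)
  have hltB := abs_lt_sqrt_sq_add (u := um) (by positivity : 0 < 4 * e * vm)
  have hp_pos : 0 < √(up ^ 2 + 4 * e * vp) - up := by linarith [le_abs_self up]
  have hq_pos : 0 < um + √(um ^ 2 + 4 * e * vm) := by linarith [neg_abs_le um]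
  have hsqA := Real.sq_sqrt (by positivity : 0 ≤ up ^ 2 + 4 * e * vp)
  have hsqB := Real.sq_sqrt (by positivity : 0 ≤ um ^ 2 + 4 * e * vm)
  exact (shock_weight_eq hvm.ne' hvp.ne' he.ne' hp_pos.ne' hq_pos.ne' (by positivity)
    (add_eq_div_sub_of_sq_eq hsqA hp_pos.ne') (sub_eq_neg_div_add_of_sq_eq hsqB hq_pos.ne')).symm
end

section
/- Let u_+ ≥ 0 ≥ u_- with u_+ > u_-, v_± > 0, and let v_*(ε) be the intermediate density of the two-rarefaction-wave Riemann solution. Then u_*(ε) = u_- + ((u_- - √(u_-² + 4ε v_-))/(2v_-))(v_*(ε) - v_-) satisfies u_*(ε) → 0 as ε → 0⁺. -/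
/-!
At `ε = 0` the square roots become `|u_±|`, so the two wave parameters reduce to `u_- / v_-` and
`u_+ / v_+`. These differ because `u_- ≤ 0 ≤ u_+` and `u_- < u_+`, so the intermediate state is
continuous in `ε` at `0`. There the numerator of `v_*` is `u_+ - u_- - u_+ + u_- = 0`, hence
`v_*(0) = 0` and `u_*(0) = u_- - (u_- / v_-) v_- = 0`.
-/

open Filter Topology

noncomputable section

/-- The smaller root of `v x² - u x - ε = 0` (for `v > 0`). -/
def lowerRoot (u v ε : ℝ) : ℝ := (u - √(u ^ 2 + 4 * ε * v)) / (2 * v)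

/-- The larger root of `v x² - u x - ε = 0` (for `v > 0`). -/
def upperRoot (u v ε : ℝ) : ℝ := (u + √(u ^ 2 + 4 * ε * v)) / (2 * v)

def intermediateDensity (um up vm vp a b : ℝ) : ℝ := (up - um - b * vp + a * vm) / (a - b)

def intermediateVelocity (um up vm vp a b : ℝ) : ℝ :=
  um + a * (intermediateDensity um up vm vp a b - vm)

end

theorem continuous_lowerRoot (u v : ℝ) : Continuous (lowerRoot u v) := by
  unfold lowerRoot; fun_prop

theorem continuous_upperRoot (u v : ℝ) : Continuous (upperRoot u v) := by
  unfold upperRoot; fun_prop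

theorem lowerRoot_zero {u : ℝ} (hu : u ≤ 0) (v : ℝ) : lowerRoot u v 0 = u / v := by
  rw [lowerRoot, mul_zero, zero_mul, add_zero, Real.sqrt_sq_eq_abs, abs_of_nonpos hu]
  ring

theorem upperRoot_zero {u : ℝ} (hu : 0 ≤ u) (v : ℝ) : upperRoot u v 0 = u / v := by
  rw [upperRoot, mul_zero, zero_mul, add_zero, Real.sqrt_sq_eq_abs, abs_of_nonneg hu]
  ring

theorem continuousAt_intermediateVelocity (um up vm vp : ℝ) {a b : ℝ} (hab : a ≠ b) :
    ContinuousAt (fun p : ℝ × ℝ => intermediateVelocity um up vm vp p.1 p.2) (a, b) := by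
  unfold intermediateVelocity intermediateDensity
  have hden : ContinuousAt (fun p : ℝ × ℝ => p.1 - p.2) (a, b) := by fun_prop
  refine continuousAt_const.add (continuousAt_fst.mul (ContinuousAt.sub ?_ continuousAt_const))
  exact ContinuousAt.div (by fun_prop) hden (sub_ne_zero.mpr hab)

theorem intermediateVelocity_div_div {vm vp : ℝ} (hvm : vm ≠ 0) (hvp : vp ≠ 0) (um up : ℝ) :
    intermediateVelocity um up vm vp (um / vm) (up / vp) = 0 := by
  have hnum : up - um - up / vp * vp + um / vm * vm = 0 := by field_simp; ring
  rw [intermediateVelocity, intermediateDensity, hnum, zero_div]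
  field_simp
  ring

theorem div_lt_div_of_nonpos_of_nonneg {um up vm vp : ℝ} (hum : um ≤ 0) (hup : 0 ≤ up)
    (hlt : um < up) (hvm : 0 < vm) (hvp : 0 < vp) : um / vm < up / vp := by
  rcases hum.lt_or_eq with hum | rfl
  · exact (div_neg_of_neg_of_pos hum hvm).trans_le (div_nonneg hup hvp.le)
  · simpa using div_pos hlt hvp

theorem ustar_rarefaction_limit_zero (um up vm vp : ℝ)
    (h1 : up ≥ 0) (h2 : 0 ≥ um) (h3 : up > um) (hvm : 0 < vm) (hvp : 0 < vp) :
    Filter.Tendsto (fun e : ℝ =>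
      um + ((um - Real.sqrt (um ^ 2 + 4 * e * vm)) / (2 * vm)) *
        ((up - um - ((up + Real.sqrt (up ^ 2 + 4 * e * vp)) / (2 * vp)) * vp + ((um - Real.sqrt (um ^ 2 + 4 * e * vm)) / (2 * vm)) * vm) / ((um - Real.sqrt (um ^ 2 + 4 * e * vm)) / (2 * vm) - (up + Real.sqrt (up ^ 2 + 4 * e * vp)) / (2 * vp)) - vm))
      (nhdsWithin 0 (Set.Ioi 0)) (nhds 0) := by
  change Tendsto (fun e => intermediateVelocity um up vm vp (lowerRoot um vm e)
    (upperRoot up vp e)) (𝓝[>] 0) (𝓝 0)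
  have hroots : Tendsto (fun e => (lowerRoot um vm e, upperRoot up vp e)) (𝓝 0)
      (𝓝 (um / vm, up / vp)) := by
    rw [← lowerRoot_zero h2, ← upperRoot_zero h1]
    exact ((continuous_lowerRoot um vm).prodMk (continuous_upperRoot up vp)).tendsto 0
  have hcont := continuousAt_intermediateVelocity um up vm vp
    (div_lt_div_of_nonpos_of_nonneg h2 h1 h3 hvm hvp).ne
  have hlim := hcont.tendsto.comp hroots
  rw [intermediateVelocity_div_div hvm.ne' hvp.ne'] at hlim
  exact hlim.mono_left nhdsWithin_le_nhds
end
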